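/- If G is a countable group which has a Cayley graph of infinite diameter — i.e., there is a generating set S of G such that the associated word-length function on G is unbounded — then G is weakly amenable. -/

import Mathlib

open Filter Set

/-- Condition (2) of appropriateness: for each `g`, each class `C` meets at most `b` classes
after translation by `g`. -/
def classBound {G : Type*} [Group G] (r : Setoid G) (g : G) (b : ℕ) : Prop :=
  ∀ C : Quotient r,
    {C' : Quotient r | ∃ h : G, Quotient.mk r h = C ∧ Quotient.mk r (g * h) = C'}.encard ≤ (b : ℕ∞)

/-- An appropriate equivalence relation on a group `G`. -/
def AppropriateRel {G : Type*} [Group G] (r : Setoid G) : Prop :=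
  Infinite (Quotient r) ∧ ∀ g : G, ∃ b : ℕ, classBound r g b

/-- The increasing sequence `A n` of finite sets of `∼`-classes witnesses the Følner-type
condition in the definition of weak amenability. -/
def WAWitness {G : Type*} [Group G] (r : Setoid G) (A : ℕ → Finset (Quotient r)) : Prop :=
  Monotone A ∧ (∀ C : Quotient r, ∃ n, C ∈ A n) ∧
    ∀ g : G, Filter.Tendsto (fun n =>
      (({C : Quotient r | C ∈ A n ∧
          ∀ h : G, Quotient.mk r h = C → Quotient.mk r (g * h) ∈ A n}.ncard : ℝ)) /
        ((A n).card : ℝ)) Filter.atTop (nhds 1)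

/-- A group is weakly amenable if it is finite or carries an appropriate equivalence relation
together with a witnessing increasing sequence of finite sets of classes. -/
def WeaklyAmenable (G : Type*) [Group G] : Prop :=
  Finite G ∨ ∃ (r : Setoid G) (A : ℕ → Finset (Quotient r)), AppropriateRel r ∧ WAWitness r A

/-- Word length of `h` with respect to the symbols `s` and `s⁻¹` for `s ∈ S`. -/
noncomputable def wordLength {G : Type*} [Group G] (S : Set G) (h : G) : ℕ :=
  sInf {n | ∃ l : List G, l.length = n ∧ (∀ x ∈ l, x ∈ S ∨ x⁻¹ ∈ S) ∧ l.prod = h}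

/-!
Group elements by their word length `|·|`. Since `||gh| - |h|| ≤ |g|`, left translation by `g`
moves a length class only to the `2|g| + 1` classes of nearby lengths, and the ball of radius `n`
is mapped into itself except for its outer `|g|` spheres. As the diameter is infinite there are
infinitely many classes, so this boundary becomes negligible in the growing balls.
-/

open Topology

theorem tendsto_div_nhds_one_of_le_of_le_add {ι : Type*} {l : Filter ι} {a b : ι → ℝ} (c : ℝ)
    (hba : ∀ i, b i ≤ a i) (hab : ∀ i, a i ≤ b i + c) (ha : Tendsto a l atTop) :
    Tendsto (fun i => b i / a i) l (𝓝 1) := by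
  have hlower : Tendsto (fun i => 1 - c / a i) l (𝓝 1) := by
    simpa using tendsto_const_nhds.sub (tendsto_const_nhds.div_atTop ha)
  refine tendsto_of_tendsto_of_tendsto_of_le_of_le' hlower tendsto_const_nhds ?_ ?_ <;>
    filter_upwards [ha.eventually_gt_atTop 0] with i hi
  · rw [sub_le_iff_le_add, ← add_div, le_div_iff₀ hi, one_mul]
    exact hab i
  · exact div_le_one_of_le₀ (hba i) hi.le

section Sublevel

variable {α : Type*} (f : α → ℕ)

theorem encard_le_of_mapsTo_kerLift_Icc {T : Set (Quotient (Setoid.ker f))} {a b : ℕ}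
    (hT : MapsTo (Setoid.kerLift f) T (Icc a b)) : T.encard ≤ (b + 1 - a : ℕ) := by
  calc T.encard ≤ (Icc a b).encard :=
        encard_le_encard_of_injOn hT (Setoid.kerLift_injective f).injOn
    _ = (b + 1 - a : ℕ) := by
        rw [← Finset.coe_Icc, encard_coe_eq_coe_finsetCard, Nat.card_Icc]

noncomputable def sublevelClasses (n : ℕ) : Finset (Quotient (Setoid.ker f)) :=
  ((finite_Iic n).preimage (Setoid.kerLift_injective f).injOn).toFinset

variable {f}

@[simp]
theorem mem_sublevelClasses {n : ℕ} {C : Quotient (Setoid.ker f)} :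
    C ∈ sublevelClasses f n ↔ Setoid.kerLift f C ≤ n := by
  simp [sublevelClasses]

theorem sublevelClasses_mono : Monotone (sublevelClasses f) := fun _ _ hmn _ hC =>
  mem_sublevelClasses.2 ((mem_sublevelClasses.1 hC).trans hmn)

theorem tendsto_card_sublevelClasses [Infinite (Quotient (Setoid.ker f))] :
    Tendsto (fun n => ((sublevelClasses f n).card : ℝ)) atTop atTop := by
  refine tendsto_natCast_atTop_atTop.comp (tendsto_atTop_atTop_of_monotone
    (fun _ _ hmn => Finset.card_le_card (sublevelClasses_mono hmn)) fun m => ?_)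
  obtain ⟨T, rfl⟩ := Infinite.exists_subset_card_eq (Quotient (Setoid.ker f)) m
  exact ⟨T.sup (Setoid.kerLift f), Finset.card_le_card fun C hC =>
    mem_sublevelClasses.2 (Finset.le_sup (f := Setoid.kerLift f) hC)⟩

theorem infinite_quotient_ker_of_unbounded (hf : ∀ N, ∃ x, N ≤ f x) :
    Infinite (Quotient (Setoid.ker f)) := by
  have hrange : (range f).Infinite := infinite_of_not_bddAbove fun ⟨N, hN⟩ => by
    obtain ⟨x, hx⟩ := hf (N + 1)
    have := hN (mem_range_self x)
    omega
  have := hrange.to_subtype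
  exact (Setoid.quotientKerEquivRange f).infinite_iff.2 this

end Sublevel

section QuasiInvariant

variable {G : Type*} [Group G]

def LeftDisplacementLE (f c : G → ℕ) : Prop :=
  ∀ g h, f (g * h) ≤ f h + c g ∧ f h ≤ f (g * h) + c g

variable {f c : G → ℕ}

theorem classBound_ker (hf : LeftDisplacementLE f c) (g : G) :
    classBound (Setoid.ker f) g (2 * c g + 1) := by
  intro C
  refine (encard_le_of_mapsTo_kerLift_Icc f (a := Setoid.kerLift f C - c g)
    (b := Setoid.kerLift f C + c g) ?_).trans (by norm_cast; omega)
  rintro _ ⟨h, rfl, rfl⟩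
  simp only [Setoid.kerLift_mk, mem_Icc]
  have := hf g h
  omega

theorem card_sublevelClasses_le_ncard_add (hf : LeftDisplacementLE f c) (g : G) (n : ℕ) :
    (sublevelClasses f n).card ≤
      {C | C ∈ sublevelClasses f n ∧ ∀ h : G, Quotient.mk (Setoid.ker f) h = C →
        Quotient.mk (Setoid.ker f) (g * h) ∈ sublevelClasses f n}.ncard + c g := by
  set A := sublevelClasses f n
  set I : Set (Quotient (Setoid.ker f)) := {C | C ∈ A ∧ ∀ h : G,
    Quotient.mk (Setoid.ker f) h = C → Quotient.mk (Setoid.ker f) (g * h) ∈ A}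
  have hboundary : MapsTo (Setoid.kerLift f) (↑A \ I) (Icc (n + 1 - c g) n) := by
    intro C ⟨hCA, hCI⟩
    have hCn := mem_sublevelClasses.1 hCA
    refine ⟨?_, hCn⟩
    by_contra hlt
    refine hCI ⟨hCA, fun h hh => mem_sublevelClasses.2 ?_⟩
    subst hh
    have := (hf g h).1
    simp only [Setoid.kerLift_mk] at hCn hlt ⊢
    omega
  have hcard : (↑A \ I).ncard ≤ c g := (encard_le_coe_iff_finite_ncard_le.1
    (encard_le_of_mapsTo_kerLift_Icc f hboundary)).2.trans (by omega)
  have hsplit : (↑A : Set (Quotient (Setoid.ker f))).ncard ≤ (↑A \ I).ncard + I.ncard :=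
    ncard_le_ncard_sdiff_add_ncard _ _ (A.finite_toSet.subset fun _ (hC : _ ∈ I) => hC.1)
  rw [← ncard_coe_finset A]
  omega

theorem weaklyAmenable_of_leftDisplacementLE (hf : LeftDisplacementLE f c)
    (hunb : ∀ N, ∃ x, N ≤ f x) : WeaklyAmenable G := by
  have := infinite_quotient_ker_of_unbounded hunb
  refine .inr ⟨Setoid.ker f, sublevelClasses f, ⟨this, fun g => ⟨_, classBound_ker hf g⟩⟩,
    sublevelClasses_mono, fun C => ⟨_, mem_sublevelClasses.2 le_rfl⟩, fun g => ?_⟩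
  refine tendsto_div_nhds_one_of_le_of_le_add (c g) (fun n => ?_) (fun n => ?_)
    tendsto_card_sublevelClasses
  · exact_mod_cast (ncard_le_ncard (sep_subset _ _) (Finset.finite_toSet _)).trans
      (ncard_coe_finset _).le
  · exact_mod_cast card_sublevelClasses_le_ncard_add hf g n

end QuasiInvariant

section WordLength

variable {G : Type*} [Group G] {S : Set G}

theorem exists_list_length_eq_wordLength (hgen : Subgroup.closure S = ⊤) (h : G) :
    ∃ l : List G, l.length = wordLength S h ∧ (∀ x ∈ l, x ∈ S ∨ x⁻¹ ∈ S) ∧ l.prod = h := by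
  have hmem : h ∈ (Subgroup.closure S).toSubmonoid := by rw [hgen]; trivial
  rw [Subgroup.closure_toSubmonoid] at hmem
  obtain ⟨l, hl, hprod⟩ := Submonoid.exists_list_of_mem_closure hmem
  have hne : {n | ∃ l : List G, l.length = n ∧ (∀ x ∈ l, x ∈ S ∨ x⁻¹ ∈ S) ∧ l.prod = h}.Nonempty :=
    ⟨l.length, l, rfl, fun x hx => (hl x hx).imp id id, hprod⟩
  exact Nat.sInf_mem hne

theorem wordLength_le_length {l : List G} (hl : ∀ x ∈ l, x ∈ S ∨ x⁻¹ ∈ S) :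
    wordLength S l.prod ≤ l.length :=
  Nat.sInf_le ⟨l, rfl, hl, rfl⟩

theorem wordLength_mul_le (hgen : Subgroup.closure S = ⊤) (g h : G) :
    wordLength S (g * h) ≤ wordLength S g + wordLength S h := by
  obtain ⟨l₁, hl₁, hS₁, rfl⟩ := exists_list_length_eq_wordLength hgen g
  obtain ⟨l₂, hl₂, hS₂, rfl⟩ := exists_list_length_eq_wordLength hgen h
  have := wordLength_le_length (l := l₁ ++ l₂) fun x hx =>
    (List.mem_append.1 hx).elim (hS₁ x) (hS₂ x)
  rwa [List.prod_append, List.length_append, hl₁, hl₂] at this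

theorem wordLength_inv_le (hgen : Subgroup.closure S = ⊤) (g : G) :
    wordLength S g⁻¹ ≤ wordLength S g := by
  obtain ⟨l, hl, hS, rfl⟩ := exists_list_length_eq_wordLength hgen g
  have := wordLength_le_length (l := (l.map (·⁻¹)).reverse) fun x hx => by
    obtain ⟨y, hy, rfl⟩ := List.mem_map.1 (List.mem_reverse.1 hx)
    simpa [or_comm] using hS y hy
  rwa [← List.prod_inv_reverse, List.length_reverse, List.length_map, hl] at this

theorem leftDisplacementLE_wordLength (hgen : Subgroup.closure S = ⊤) :
    LeftDisplacementLE (wordLength S) (wordLength S) := fun g h => by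
  have hback := wordLength_mul_le hgen g⁻¹ (g * h)
  rw [inv_mul_cancel_left] at hback
  have := wordLength_inv_le hgen g
  exact ⟨(wordLength_mul_le hgen g h).trans_eq (add_comm _ _), by omega⟩

end WordLength

theorem stmt9_general (G : Type*) [Group G] (S : Set G)
    (hgen : Subgroup.closure S = ⊤)
    (hdiam : ∀ N : ℕ, ∃ h : G, N ≤ wordLength S h) :
    WeaklyAmenable G :=
  weaklyAmenable_of_leftDisplacementLE (leftDisplacementLE_wordLength hgen) hdiam

theorem stmt9 (G : Type*) [Group G] [Countable G] (S : Set G)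
    (hgen : Subgroup.closure S = ⊤)
    (hdiam : ∀ N : ℕ, ∃ h : G, N ≤ wordLength S h) :
    WeaklyAmenable G :=
  stmt9_general G S hgen hdiam
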